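/- The following formulas are provable in the Hilbert system S for all formulas A, B, C of L⊃: (Ex) (A⊃(B⊃C))→(B⊃(A⊃C)), and (Pfix) (B→C)→((A⊃B)→(A⊃C)). -/

import Mathlib

/-- Formulas of the language L⊃ : propositional variables with ∧, ∨,
    intuitionistic → (`imp`) and classical ⊃ (`sup`). -/
inductive Formula : Type
  | var : ℕ → Formula
  | and : Formula → Formula → Formula
  | or  : Formula → Formula → Formula
  | imp : Formula → Formula → Formula
  | sup : Formula → Formula → Formula

/-- The Hilbert system S : `SDeriv Γ A` means Γ ⊢ A. -/
inductive SDeriv : Set Formula → Formula → Prop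
  | hyp {Γ A} : A ∈ Γ → SDeriv Γ A
  | ax1 {Γ} (A B : Formula) : SDeriv Γ (A.imp (B.imp A))
  | ax2 {Γ} (A B C : Formula) :
      SDeriv Γ ((A.imp (B.imp C)).imp ((A.imp B).imp (A.imp C)))
  | ax3 {Γ} (A B : Formula) : SDeriv Γ ((A.and B).imp A)
  | ax4 {Γ} (A B : Formula) : SDeriv Γ ((A.and B).imp B)
  | ax5 {Γ} (A B C : Formula) :
      SDeriv Γ ((C.imp A).imp ((C.imp B).imp (C.imp (A.and B))))
  | ax6 {Γ} (A B : Formula) : SDeriv Γ (A.imp (A.or B))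
  | ax7 {Γ} (A B : Formula) : SDeriv Γ (B.imp (A.or B))
  | ax8 {Γ} (A B C : Formula) :
      SDeriv Γ ((A.imp C).imp ((B.imp C).imp ((A.or B).imp C)))
  | axM1 {Γ} (A B : Formula) : SDeriv Γ ((A.imp B).sup (A.sup B))
  | axM2 {Γ} (A B C : Formula) :
      SDeriv Γ ((A.sup (B.sup C)).imp ((A.sup B).sup (A.sup C)))
  | axM3 {Γ} (A B C : Formula) :
      SDeriv Γ ((A.sup (B.imp C)).imp (B.imp (A.sup C)))
  | axM4 {Γ} (A B C : Formula) :
      SDeriv Γ ((A.imp (B.sup C)).imp (B.sup (A.imp C)))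
  | axM5 {Γ} (A B C : Formula) :
      SDeriv Γ (((A.sup B).sup C).imp ((A.sup C).imp C))
  | axM6 {Γ} (A B C : Formula) :
      SDeriv Γ ((A.sup C).imp ((B.sup C).imp ((A.or B).sup C)))
  | mp {Γ A B} : SDeriv Γ A → SDeriv Γ (A.sup B) → SDeriv Γ B

/-!
MP is the only rule and it detaches along `⊃`, AxM2 is the S axiom for `⊃` and AxM1 turns
Ax1 into the K axiom for `⊃`, so the deduction theorem holds for `⊃`. Instancing AxM4 with
itself shows that a derivable `P` can be discharged from `P ⊃ C` underneath `→`, and AxM3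
moves a `⊃`-antecedent discharged by the deduction theorem inside an `→`. Both formulas then
follow by working in a context containing the `⊃`-antecedents.
-/

namespace SDeriv

variable {Γ : Set Formula} {A B C : Formula}

lemma mp_imp (h₁ : SDeriv Γ A) (h₂ : SDeriv Γ (A.imp B)) : SDeriv Γ B :=
  mp h₁ (mp h₂ (axM1 A B))

lemma imp_id (A : Formula) : SDeriv Γ (A.imp A) :=
  mp_imp (ax1 A A) (mp_imp (ax1 A (A.imp A)) (ax2 A (A.imp A) A))

lemma imp_intro (A : Formula) (h : SDeriv Γ B) : SDeriv Γ (A.imp B) :=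
  mp_imp h (ax1 B A)

lemma imp_trans (h₁ : SDeriv Γ (A.imp B)) (h₂ : SDeriv Γ (B.imp C)) :
    SDeriv Γ (A.imp C) :=
  mp_imp h₁ (mp_imp (imp_intro A h₂) (ax2 A B C))

lemma imp_comm (h : SDeriv Γ (A.imp (B.imp C))) : SDeriv Γ (B.imp (A.imp C)) :=
  imp_trans (ax1 B A) (mp_imp h (ax2 A B C))

lemma sup_of_imp (h : SDeriv Γ (A.imp B)) : SDeriv Γ (A.sup B) :=
  mp h (axM1 A B)

lemma sup_intro (A : Formula) (h : SDeriv Γ B) : SDeriv Γ (A.sup B) :=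
  sup_of_imp (imp_intro A h)

theorem sup_of_insert (h : SDeriv (insert A Γ) B) : SDeriv Γ (A.sup B) := by
  generalize hΔ : insert A Γ = Δ at h
  induction h with
  | hyp hm =>
    subst hΔ
    rcases Set.mem_insert_iff.1 hm with rfl | hm
    · exact sup_of_imp (imp_id _)
    · exact sup_intro A (hyp hm)
  | ax1 X Y => exact sup_intro A (ax1 X Y)
  | ax2 X Y Z => exact sup_intro A (ax2 X Y Z)
  | ax3 X Y => exact sup_intro A (ax3 X Y)
  | ax4 X Y => exact sup_intro A (ax4 X Y)
  | ax5 X Y Z => exact sup_intro A (ax5 X Y Z)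
  | ax6 X Y => exact sup_intro A (ax6 X Y)
  | ax7 X Y => exact sup_intro A (ax7 X Y)
  | ax8 X Y Z => exact sup_intro A (ax8 X Y Z)
  | axM1 X Y => exact sup_intro A (axM1 X Y)
  | axM2 X Y Z => exact sup_intro A (axM2 X Y Z)
  | axM3 X Y Z => exact sup_intro A (axM3 X Y Z)
  | axM4 X Y Z => exact sup_intro A (axM4 X Y Z)
  | axM5 X Y Z => exact sup_intro A (axM5 X Y Z)
  | axM6 X Y Z => exact sup_intro A (axM6 X Y Z)
  | mp _ _ ih₁ ih₂ => exact mp ih₁ (mp_imp ih₂ (axM2 _ _ _))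

lemma imp_sup_of_insert {H : Formula} (h : SDeriv (insert A Γ) (H.imp C)) :
    SDeriv Γ (H.imp (A.sup C)) :=
  mp_imp (sup_of_insert h) (axM3 A H C)

lemma sup_eval (hA : SDeriv Γ A) : SDeriv Γ ((A.sup B).imp B) :=
  -- AxM4 instantiated with itself: `A ⊃ ((X → (A ⊃ B)) → (X → B))`, here with `X := A ⊃ B`.
  mp_imp (imp_id (A.sup B))
    (mp hA (mp_imp (axM4 (A.sup B) A B) (axM4 ((A.sup B).imp (A.sup B)) A ((A.sup B).imp B))))

end SDeriv

open SDeriv in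
/-- (Ex) and (Pfix) are provable in S. -/
theorem ex_and_pfix :
    (∀ A B C : Formula,
      SDeriv ∅ ((A.sup (B.sup C)).imp (B.sup (A.sup C)))) ∧
    (∀ A B C : Formula,
      SDeriv ∅ ((B.imp C).imp ((A.sup B).imp (A.sup C)))) := by
  refine ⟨fun A B C => ?ex, fun A B C => ?pfix⟩
  case ex =>
    let Γ : Set Formula := insert A (insert B ∅)
    have hA : SDeriv Γ A := hyp (Set.mem_insert _ _)
    have hB : SDeriv Γ B := hyp (Set.mem_insert_of_mem _ (Set.mem_insert _ _))
    have h : SDeriv Γ ((A.sup (B.sup C)).imp C) := imp_trans (sup_eval hA) (sup_eval hB)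
    exact imp_sup_of_insert (imp_sup_of_insert h)
  case pfix =>
    let Γ : Set Formula := insert A ∅
    have hA : SDeriv Γ A := hyp (Set.mem_insert _ _)
    have h : SDeriv Γ ((A.sup B).imp ((B.imp C).imp C)) :=
      imp_trans (sup_eval hA) (imp_comm (imp_id (B.imp C)))
    exact imp_comm (imp_trans (imp_sup_of_insert h) (axM3 A (B.imp C) C))
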